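/- arXiv:2603.21001 — 5 statements merged into one kernel-verified Lean document; each statement's English description precedes it below -/
import Mathlib

section
/- Let p be a prime, let V be a nonzero finite-dimensional vector space over a finite field of characteristic p, and let H be a subgroup of GL(V) acting irreducibly on V. If p² divides the order of the affine permutation group G = V ⋊ H, then (G, V) is p-moderate. -/
open Pointwise

/-- The `p`-part of a natural number `n`: the largest power of `p` dividing `n`. -/
def pPart (p n : ℕ) : ℕ := p ^ n.factorization p

/-- A group `G` acting on `Ω` is `p`-moderate if there is a subset `Δ` of `Ω` whose
setwise stabilizer `S` satisfies `1 < |S|_p < |G|_p`. -/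
def IsPModerate (p : ℕ) (G : Type*) [Group G] (Ω : Type*) [MulAction G Ω] : Prop :=
  ∃ Δ : Set Ω,
    1 < pPart p (Nat.card (MulAction.stabilizer G Δ)) ∧
      pPart p (Nat.card (MulAction.stabilizer G Δ)) < pPart p (Nat.card G)

/-- The affine permutation group `V ⋊ H` on `V` determined by a subgroup `H` of `GL(V)`:
all permutations of `V` of the form `x ↦ h(x) + v` with `h ∈ H`, `v ∈ V`. -/
def affPerm {F V : Type*} [Field F] [AddCommGroup V] [Module F V]
    (H : Subgroup (V →ₗ[F] V)ˣ) : Subgroup (Equiv.Perm V) where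
  carrier := {σ | ∃ h ∈ H, ∃ v : V, ∀ x : V, σ x = (h : V →ₗ[F] V) x + v}
  one_mem' := ⟨1, H.one_mem, 0, fun x => by simp⟩
  mul_mem' := by
    rintro σ τ ⟨h, hH, v, hσ⟩ ⟨h', h'H, v', hτ⟩
    refine ⟨h * h', H.mul_mem hH h'H, (h : V →ₗ[F] V) v' + v, fun x => ?_⟩
    simp only [Equiv.Perm.mul_apply, hσ, hτ, Units.val_mul, Module.End.mul_apply, map_add]
    abel
  inv_mem' := by
    rintro σ ⟨h, hH, v, hσ⟩
    refine ⟨h⁻¹, H.inv_mem hH, -(((h⁻¹ : (V →ₗ[F] V)ˣ) : V →ₗ[F] V) v), fun y => ?_⟩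
    have key : σ (((h⁻¹ : (V →ₗ[F] V)ˣ) : V →ₗ[F] V) y +
        -(((h⁻¹ : (V →ₗ[F] V)ˣ) : V →ₗ[F] V) v)) = y := by
      rw [hσ, map_add, map_neg, ← Module.End.mul_apply, ← Module.End.mul_apply,
        ← Units.val_mul, mul_inv_cancel]
      simp
    calc σ⁻¹ y = σ⁻¹ (σ (((h⁻¹ : (V →ₗ[F] V)ˣ) : V →ₗ[F] V) y +
        -(((h⁻¹ : (V →ₗ[F] V)ˣ) : V →ₗ[F] V) v))) := by rw [key]
    _ = _ := by simp

/-! Since `|V ⋊ H| = |H| · |V|` and the stabilizer of an additive subgroup `W ≤ V` has order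
`|Stab_H(W)| · |W|`, two choices of `Δ` suffice. If `p ∣ |H|`, take `Δ = {0}`: its stabilizer
is `H`, whose `p`-part is nontrivial but misses that of `V ≠ 0`. If `p ∤ |H|`, then
`|G|_p = |V|_p ≥ p²`, and the line `W = ℤ x` through any `x ≠ 0` has order `p` in
characteristic `p`, so its stabilizer has `p`-part exactly `p`. -/

namespace affPerm

variable {F V : Type*} [Field F] [AddCommGroup V] [Module F V] {H : Subgroup (V →ₗ[F] V)ˣ}

theorem exists_linear_part (σ : affPerm H) :
    ∃ h ∈ H, ∀ x, (σ : Equiv.Perm V) x = (h : V →ₗ[F] V) x + (σ : Equiv.Perm V) 0 := by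
  obtain ⟨h, hH, v, hσ⟩ := σ.2
  exact ⟨h, hH, fun x => by simp [hσ]⟩

noncomputable def linearPart (σ : affPerm H) : H :=
  ⟨(exists_linear_part σ).choose, (exists_linear_part σ).choose_spec.1⟩

theorem apply_eq_linearPart_add (σ : affPerm H) (x : V) :
    (σ : Equiv.Perm V) x = ((linearPart σ).1 : V →ₗ[F] V) x + (σ : Equiv.Perm V) 0 :=
  (exists_linear_part σ).choose_spec.2 x

def mk (h : H) (v : V) : affPerm H :=
  ⟨(LinearMap.GeneralLinearGroup.toLinearEquiv h.1).toEquiv.trans (Equiv.addRight v),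
    h, h.2, v, fun _ => rfl⟩

theorem mk_apply (h : H) (v x : V) : (mk h v : Equiv.Perm V) x = (h.1 : V →ₗ[F] V) x + v := rfl

theorem linearPart_mk (h : H) (v : V) : linearPart (mk h v) = h := by
  refine Subtype.ext (Units.ext (LinearMap.ext fun x => add_right_cancel (b := v) ?_))
  simpa [mk_apply] using (apply_eq_linearPart_add (mk h v) x).symm

noncomputable def equivProd : affPerm H ≃ H × V where
  toFun σ := (linearPart σ, (σ : Equiv.Perm V) 0)
  invFun hv := mk hv.1 hv.2
  left_inv σ := Subtype.ext (Equiv.ext fun x => (apply_eq_linearPart_add σ x).symm)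
  right_inv := fun ⟨h, v⟩ => Prod.ext (linearPart_mk h v) (by simp [mk_apply])

theorem card_eq_mul : Nat.card (affPerm H) = Nat.card H * Nat.card V := by
  rw [Nat.card_congr equivProd, Nat.card_prod]

theorem smul_set_eq (σ : affPerm H) (s : Set V) :
    σ • s = (· + (σ : Equiv.Perm V) 0) '' (linearPart σ • s) := by
  rw [← Set.image_smul, ← Set.image_smul, Set.image_image]
  exact Set.image_congr fun x _ => apply_eq_linearPart_add σ x

theorem mem_stabilizer_addSubgroup_iff (σ : affPerm H) (W : AddSubgroup V) :
    σ ∈ MulAction.stabilizer (affPerm H) (W : Set V) ↔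
      linearPart σ ∈ MulAction.stabilizer H (W : Set V) ∧ (σ : Equiv.Perm V) 0 ∈ W := by
  have translate_self {v : V} (hv : v ∈ W) : (· + v) '' (W : Set V) = W := by
    ext x
    simp [Set.image_add_right, W.add_mem_cancel_right (W.neg_mem hv)]
  simp only [MulAction.mem_stabilizer_iff, smul_set_eq]
  constructor
  · intro hσ
    have h0 : (σ : Equiv.Perm V) 0 ∈ W := by
      rw [← SetLike.mem_coe, ← hσ]
      exact ⟨0, ⟨0, W.zero_mem, map_zero _⟩, zero_add _⟩
    refine ⟨Set.image_injective.mpr (add_left_injective ((σ : Equiv.Perm V) 0)) ?_, h0⟩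
    rw [hσ, translate_self h0]
  · rintro ⟨hh, h0⟩
    rw [hh, translate_self h0]

theorem card_stabilizer_addSubgroup (W : AddSubgroup V) :
    Nat.card (MulAction.stabilizer (affPerm H) (W : Set V)) =
      Nat.card (MulAction.stabilizer H (W : Set V)) * Nat.card W := by
  rw [← Nat.card_prod, Nat.card_congr ((equivProd.subtypeEquiv fun σ =>
    mem_stabilizer_addSubgroup_iff σ W).trans Equiv.subtypeProdEquivProd)]

theorem card_stabilizer_zero : Nat.card (MulAction.stabilizer (affPerm H) ({0} : Set V)) =
    Nat.card H := by
  have hbot : MulAction.stabilizer H ({0} : Set V) = ⊤ :=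
    eq_top_iff.mpr fun h _ => by simp [MulAction.mem_stabilizer_iff]
  simpa [hbot] using card_stabilizer_addSubgroup (H := H) ⊥

end affPerm

theorem exists_addSubgroup_card_eq_char {p : ℕ} [Fact p.Prime] (R V : Type*) [Ring R]
    [CharP R p] [AddCommGroup V] [Module R V] [Nontrivial V] :
    ∃ W : AddSubgroup V, Nat.card W = p := by
  obtain ⟨x, hx⟩ := exists_ne (0 : V)
  refine ⟨AddSubgroup.zmultiples x, Nat.card_zmultiples x ▸ addOrderOf_eq_prime ?_ hx⟩
  rw [← Nat.cast_smul_eq_nsmul R, CharP.cast_eq_zero, zero_smul]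

theorem isPModerate_of_factorization {p : ℕ} (hp : p.Prime) {G Ω : Type*} [Group G]
    [MulAction G Ω] (Δ : Set Ω)
    (hpos : 0 < (Nat.card (MulAction.stabilizer G Δ)).factorization p)
    (hlt : (Nat.card (MulAction.stabilizer G Δ)).factorization p < (Nat.card G).factorization p) :
    IsPModerate p G Ω :=
  ⟨Δ, Nat.one_lt_pow hpos.ne' hp.one_lt, Nat.pow_lt_pow_right hp.one_lt hlt⟩

theorem affine_char_p_is_p_moderate_general
    (p : ℕ) (hp : p.Prime) (F V : Type*) [Field F] [Finite F] [CharP F p]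
    [AddCommGroup V] [Module F V] [FiniteDimensional F V] [Nontrivial V]
    (H : Subgroup (V →ₗ[F] V)ˣ)
    (hdvd : p ^ 2 ∣ Nat.card (affPerm H)) :
    IsPModerate p (affPerm H) V := by
  have : Fact p.Prime := ⟨hp⟩
  have : Finite V := Module.finite_of_finite F
  have : Finite (V →ₗ[F] V) := Module.finite_of_finite F
  have hH : Nat.card H ≠ 0 := Nat.card_pos.ne'
  have hV : Nat.card V ≠ 0 := Nat.card_pos.ne'
  have hG : (Nat.card (affPerm H)).factorization p =
      (Nat.card H).factorization p + (Nat.card V).factorization p := by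
    rw [affPerm.card_eq_mul, Nat.factorization_mul hH hV, Finsupp.add_apply]
  obtain ⟨W, hW⟩ := exists_addSubgroup_card_eq_char F V
  by_cases hpH : p ∣ Nat.card H
  · have hpV : 0 < (Nat.card V).factorization p :=
      hp.factorization_pos_of_dvd hV (hW ▸ AddSubgroup.card_addSubgroup_dvd_card W)
    refine isPModerate_of_factorization hp {0} ?_ ?_ <;> rw [affPerm.card_stabilizer_zero]
    · exact hp.factorization_pos_of_dvd hH hpH
    · omega
  · have hS : (Nat.card (MulAction.stabilizer (affPerm H) (W : Set V))).factorization p = 1 := by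
      have hpS : ¬ p ∣ Nat.card (MulAction.stabilizer H (W : Set V)) :=
        fun h => hpH (h.trans (Subgroup.card_subgroup_dvd_card _))
      rw [affPerm.card_stabilizer_addSubgroup, hW,
        Nat.factorization_mul Nat.card_pos.ne' hp.ne_zero, Finsupp.add_apply,
        Nat.factorization_eq_zero_of_not_dvd hpS, hp.factorization_self]
    have h2 : 2 ≤ (Nat.card (affPerm H)).factorization p :=
      (hp.pow_dvd_iff_le_factorization Nat.card_pos.ne').mp hdvd
    exact isPModerate_of_factorization hp W (by omega) (by omega)

theorem affine_char_p_is_p_moderate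
    (p : ℕ) (hp : p.Prime) (F V : Type*) [Field F] [Finite F] [CharP F p]
    [AddCommGroup V] [Module F V] [FiniteDimensional F V] [Nontrivial V]
    (H : Subgroup (V →ₗ[F] V)ˣ)
    (hirr : ∀ W : Submodule F V,
      (∀ h ∈ H, ∀ v ∈ W, (h : V →ₗ[F] V) v ∈ W) → W = ⊥ ∨ W = ⊤)
    (hdvd : p ^ 2 ∣ Nat.card (affPerm H)) :
    IsPModerate p (affPerm H) V :=
  affine_char_p_is_p_moderate_general p hp F V H hdvd
end

section
/- Let V be a finite-dimensional vector space over a finite field of odd characteristic (so |V| is odd), and let H be a subgroup of GL(V) whose Sylow 2-subgroups are elementary abelian of order 4. If H has a regular orbit on V (i.e., some v ∈ V has trivial stabilizer in H), then the affine permutation group G = V ⋊ H acting on V is 2-moderate. -/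
open Pointwise

/-! An involution `t ∈ H` (it exists since `4 ∣ |H|`) preserves `Δ = {0, v, t v}`, where `v` is a
regular point. An affine map fixing `0` and `v` is the identity, so the stabilizer of `Δ` embeds
into `Sym(Δ)`, whose order divides `6`. Hence `|Stab(Δ)|₂ = 2 < 4 ≤ |V ⋊ H|₂`. -/

open MulAction

lemma pPart_eq_self_of_dvd_of_not_sq_dvd {p n : ℕ} (hp : p.Prime) (hn : n ≠ 0) (h : p ∣ n)
    (hsq : ¬ p ^ 2 ∣ n) : pPart p n = p := by
  have hge : 1 ≤ n.factorization p := (hp.dvd_iff_one_le_factorization hn).1 h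
  have hlt : n.factorization p < 2 := by
    rw [← not_le, ← hp.pow_dvd_iff_le_factorization hn]
    exact hsq
  rw [pPart, show n.factorization p = 1 by omega, pow_one]

lemma pow_le_pPart_of_pow_dvd {p n k : ℕ} (hp : p.Prime) (hn : n ≠ 0) (h : p ^ k ∣ n) :
    p ^ k ≤ pPart p n :=
  Nat.le_of_dvd (Nat.ordProj_pos n p) ((hp.pow_dvd_iff_dvd_ordProj hn).1 h)

lemma isPModerate_of_card_stabilizer {p : ℕ} (hp : p.Prime) {G Ω : Type*} [Group G] [Finite G]
    [MulAction G Ω] (Δ : Set Ω) (hS : p ∣ Nat.card (stabilizer G Δ))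
    (hS2 : ¬ p ^ 2 ∣ Nat.card (stabilizer G Δ)) (hG : p ^ 2 ∣ Nat.card G) :
    IsPModerate p G Ω := by
  refine ⟨Δ, ?_, ?_⟩ <;>
    rw [pPart_eq_self_of_dvd_of_not_sq_dvd hp Nat.card_pos.ne' hS hS2]
  · exact hp.one_lt
  · calc p < p ^ 2 := lt_self_pow₀ hp.one_lt one_lt_two
      _ ≤ pPart p (Nat.card G) := pow_le_pPart_of_pow_dvd hp Nat.card_pos.ne' hG

section SetStabilizer

variable {G Ω : Type*} [Group G] [MulAction G Ω]

lemma card_stabilizer_dvd_factorial {Δ : Set Ω} [Finite Δ]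
    (hfix : ∀ g : G, (∀ x ∈ Δ, g • x = x) → g = 1) :
    Nat.card (stabilizer G Δ) ∣ (Nat.card Δ).factorial := by
  rw [← Nat.card_perm]
  refine Subgroup.card_dvd_of_injective (toPermHom (stabilizer G Δ) Δ) ?_
  rw [← MonoidHom.ker_eq_bot_iff, eq_bot_iff]
  intro g hg
  have hg : ∀ x : Δ, g • x = x := fun x => Equiv.ext_iff.1 hg x
  exact Subtype.ext (hfix g fun x hx => congrArg Subtype.val (hg ⟨x, hx⟩))

lemma mem_stabilizer_insert_pair_of_sq_eq_one {g : G} (hg : g ^ 2 = 1) {a : Ω} (ha : g • a = a)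
    (x : Ω) : g ∈ stabilizer G ({a, x, g • x} : Set Ω) := by
  have hgx : g • g • x = x := by rw [smul_smul, ← sq, hg, one_smul]
  rw [mem_stabilizer_iff, Set.smul_set_insert, Set.smul_set_insert, Set.smul_set_singleton, ha, hgx,
    Set.pair_comm]

end SetStabilizer

section Affine

variable {F V : Type*} [Field F] [AddCommGroup V] [Module F V] {H : Subgroup (V →ₗ[F] V)ˣ}

lemma toPerm_mem_affPerm {u : (V →ₗ[F] V)ˣ} (hu : u ∈ H) : toPerm u ∈ affPerm H :=
  ⟨u, hu, 0, fun _ => (add_zero _).symm⟩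

variable (H) in
def toAffPerm : H →* affPerm H :=
  ((toPermHom _ V).comp H.subtype).codRestrict _ fun u => toPerm_mem_affPerm u.2

@[simp]
lemma toAffPerm_apply (u : H) (x : V) : (toAffPerm H u : Equiv.Perm V) x = ((u : (V →ₗ[F] V)ˣ) : V →ₗ[F] V) x :=
  rfl

lemma toAffPerm_injective : Function.Injective (toAffPerm H) := by
  intro u u' h
  exact Subtype.ext <| Units.ext <| LinearMap.ext fun x =>
    Equiv.ext_iff.1 (congrArg Subtype.val h) x

lemma card_dvd_card_affPerm : Nat.card H ∣ Nat.card (affPerm H) :=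
  Subgroup.card_dvd_of_injective _ toAffPerm_injective

lemma eq_one_of_mem_affPerm_of_regular {v : V} (hv : ∀ h ∈ H, (h : V →ₗ[F] V) v = v → h = 1)
    {σ : Equiv.Perm V} (hσ : σ ∈ affPerm H) (h0 : σ 0 = 0) (hσv : σ v = v) : σ = 1 := by
  obtain ⟨h, hH, w, hσ⟩ := hσ
  have hw : w = 0 := by simpa [hσ] using h0
  have hh : h = 1 := hv h hH (by simpa [hσ, hw] using hσv)
  ext x
  simp [hσ, hw, hh]

end Affine

theorem affine_two_moderate_of_regular_orbit_general
    (F V : Type*) [Field F] [Finite F]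
    [AddCommGroup V] [Module F V] [FiniteDimensional F V]
    (H : Subgroup (V →ₗ[F] V)ˣ)
    -- the Sylow 2-subgroups of H are elementary abelian of order 4
    (hSyl : ∀ P : Sylow 2 H, Nat.card P = 4 ∧
      (∀ x y : P, x * y = y * x) ∧ ∀ x : P, x ^ 2 = 1)
    -- H has a regular orbit on V
    (hreg : ∃ v : V, ∀ h ∈ H, (h : V →ₗ[F] V) v = v → h = 1) :
    IsPModerate 2 (affPerm H) V := by
  have : Finite V := Module.finite_of_finite F
  have : Finite (V →ₗ[F] V) := Module.finite_of_finite F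
  obtain ⟨v, hv⟩ := hreg
  obtain ⟨P⟩ : Nonempty (Sylow 2 H) := inferInstance
  have h4H : 4 ∣ Nat.card H := (hSyl P).1 ▸ Subgroup.card_subgroup_dvd_card _
  obtain ⟨t, ht⟩ := exists_prime_orderOf_dvd_card' 2 (dvd_trans (by norm_num) h4H)
  set g := toAffPerm H t
  have hg : g ^ 2 = 1 := by
    rw [← orderOf_dvd_iff_pow_eq_one, orderOf_injective _ toAffPerm_injective, ht]
  let Δ : Set V := {0, v, g • v}
  have hgΔ : g ∈ stabilizer _ Δ :=
    mem_stabilizer_insert_pair_of_sq_eq_one hg (by simp [g, Subgroup.smul_def]) v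
  have hΔ : Nat.card Δ ≤ 3 := by
    rw [Nat.card_coe_set_eq]
    exact (Set.ncard_insert_le _ _).trans
      (Nat.succ_le_succ ((Set.ncard_insert_le _ _).trans (by simp)))
  have hS6 : Nat.card (stabilizer (affPerm H) Δ) ∣ 6 :=
    (card_stabilizer_dvd_factorial fun σ hσ => Subtype.ext <|
      eq_one_of_mem_affPerm_of_regular hv σ.2 (hσ 0 (by simp [Δ])) (hσ v (by simp [Δ]))).trans
    ((Nat.factorial_dvd_factorial hΔ).trans (by decide : Nat.factorial 3 ∣ 6))
  refine isPModerate_of_card_stabilizer Nat.prime_two Δ ?_ ?_ (h4H.trans card_dvd_card_affPerm)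
  · rw [← ht, ← orderOf_injective _ toAffPerm_injective, ← Subgroup.orderOf_mk _ hgΔ]
    exact orderOf_dvd_natCard _
  · exact fun h4 => absurd (h4.trans hS6) (by decide)

theorem affine_two_moderate_of_regular_orbit
    (F V : Type*) [Field F] [Finite F] (hchar : Odd (ringChar F))
    [AddCommGroup V] [Module F V] [FiniteDimensional F V]
    (H : Subgroup (V →ₗ[F] V)ˣ)
    -- the Sylow 2-subgroups of H are elementary abelian of order 4
    (hSyl : ∀ P : Sylow 2 H, Nat.card P = 4 ∧
      (∀ x y : P, x * y = y * x) ∧ ∀ x : P, x ^ 2 = 1)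
    -- H has a regular orbit on V
    (hreg : ∃ v : V, ∀ h ∈ H, (h : V →ₗ[F] V) v = v → h = 1) :
    IsPModerate 2 (affPerm H) V :=
  affine_two_moderate_of_regular_orbit_general F V H hSyl hreg
end

section
/- Let G be a finite group acting faithfully on a finite set Ω with |Ω| = n, let p be a prime, and let P be a Sylow p-subgroup of G that is not elementary abelian. Let z be an element of order p in Φ(P) ∩ Z(P) (the intersection of the Frattini subgroup and the center of P), and let f be the number of fixed points of z on Ω. If |G : N_G(P)| < 2^{(n−f)(1/p − 1/p²)}, then (G, Ω) is p-moderate. -/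
open Pointwise

/-!
Let `Z = ⟨z⟩` and let `F` be the fixed-point set of `z`, so `|F| = f`. Counting each point with
weight one over its orbit length, `Z` has at least `f + (n - f)/p` orbits. As `z ∈ Φ(P)` lies in
every subgroup of index `p` of `P`, a point outside `F` has a `P`-orbit of length at least `p²`,
so `P` has at most `f + (n - f)/p²` orbits. The subsets of `Ω` stabilised by some Sylow
`p`-subgroup are the translates of the `P`-invariant ones, hence number at most
`|G : N_G(P)| · 2^(#P-orbits)`; the hypothesis makes this smaller than the number `2^(#Z-orbits)`
of `Z`-invariant subsets. A `Z`-invariant subset `Δ` stabilised by no Sylow `p`-subgroup has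
`p ∣ |G_Δ|` but `|G_Δ|_p < |G|_p`.
-/

open MulAction Finset

namespace Subgroup

variable {G : Type*} [Group G]

theorem isCoatom_of_index_prime {H : Subgroup G} (hH : H.index.Prime) : IsCoatom H := by
  have : H.FiniteIndex := ⟨hH.ne_zero⟩
  refine ⟨fun htop => by simp [htop, Nat.not_prime_one] at hH, fun K hK => index_eq_one.1 ?_⟩
  exact ((Nat.dvd_prime hH).1 (index_dvd_of_le hK.le)).resolve_right (index_strictAnti hK).ne

theorem sq_le_index_of_not_frattini_le [Finite G] {p : ℕ} [Fact p.Prime] (hG : IsPGroup p G)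
    {H : Subgroup G} (hH : ¬ frattini G ≤ H) : p ^ 2 ≤ H.index := by
  obtain ⟨k, hk⟩ := hG.index H
  have hk0 : k ≠ 0 := by
    rintro rfl
    exact hH (by simp [index_eq_one.1 (by simpa using hk)])
  have hk1 : k ≠ 1 := by
    rintro rfl
    exact hH (frattini_le_coatom (isCoatom_of_index_prime (by simpa [hk] using Fact.out)))
  rw [hk]
  exact Nat.pow_le_pow_right (Fact.out : p.Prime).pos (by omega)

end Subgroup

theorem IsPGroup.sq_le_card_orbit {p : ℕ} [Fact p.Prime] {P X : Type*} [Group P] [Finite P]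
    [MulAction P X] (hP : IsPGroup p P) {z : P} (hz : z ∈ frattini P) {x : X} (hzx : z • x ≠ x) :
    p ^ 2 ≤ Nat.card (orbit P x) := by
  rw [Nat.card_coe_set_eq, ← index_stabilizer]
  exact Subgroup.sq_le_index_of_not_frattini_le hP fun hle => hzx (hle hz)

namespace MulAction

variable {G X : Type*} [Group G] [MulAction G X]

theorem card_orbitRel_quotient_eq_sum_inv [Fintype X] {K : Type*} [DivisionSemiring K]
    [CharZero K] :
    (Nat.card (orbitRel.Quotient G X) : K) = ∑ x : X, (Nat.card (orbit G x) : K)⁻¹ := by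
  classical
  have := Fintype.ofFinite (orbitRel.Quotient G X)
  have (θ : orbitRel.Quotient G X) : Fintype θ.orbit := Fintype.ofFinite _
  rw [← (selfEquivSigmaOrbits' G X).symm.sum_comp, Fintype.sum_sigma, Nat.card_eq_fintype_card,
    ← Finset.card_univ, Finset.card_eq_sum_ones, Nat.cast_sum]
  refine Fintype.sum_congr _ _ fun θ => ?_
  have hθ (x : θ.orbit) : orbit G (x : X) = θ.orbit := by
    rw [← orbitRel.Quotient.orbit_mk, orbitRel.Quotient.mem_orbit.1 x.2]
  change _ = ∑ x : θ.orbit, (Nat.card (orbit G (x : X)) : K)⁻¹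
  have hne : (Nat.card θ.orbit : K) ≠ 0 := by
    have := θ.nonempty_orbit.to_subtype
    exact Nat.cast_ne_zero.2 Nat.card_pos.ne'
  simp only [hθ, Finset.sum_const, Finset.card_univ, nsmul_eq_mul, ← Nat.card_eq_fintype_card,
    Nat.cast_one, mul_inv_cancel₀ hne]

variable {K : Type*} [Field K] [LinearOrder K] [IsStrictOrderedRing K]

theorem card_orbitRel_quotient_le_of_le_card_orbit [Fintype X] [DecidableEq X] (F : Finset X)
    {m : ℕ} (hm : 0 < m) (h : ∀ x ∉ F, m ≤ Nat.card (orbit G x)) :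
    (Nat.card (orbitRel.Quotient G X) : K) ≤ #F + #Fᶜ / m := by
  rw [card_orbitRel_quotient_eq_sum_inv, ← sum_add_sum_compl F]
  gcongr ?_ + ?_
  · calc _ ≤ ∑ _x ∈ F, (1 : K) := sum_le_sum fun x _ => by
          have := (nonempty_orbit (M := G) x).to_subtype
          exact inv_le_one_of_one_le₀ (Nat.one_le_cast.2 Nat.card_pos)
      _ = #F := by simp
  · calc _ ≤ ∑ _x ∈ Fᶜ, (m : K)⁻¹ := sum_le_sum fun x hx =>
          inv_anti₀ (by positivity) (by exact_mod_cast h x (mem_compl.1 hx))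
      _ = #Fᶜ / m := by simp [div_eq_mul_inv]

theorem le_card_orbitRel_quotient_of_card_orbit_le [Fintype X] [DecidableEq X] (F : Finset X)
    {m : ℕ} (hF : (F : Set X) ⊆ fixedPoints G X) (h : ∀ x : X, Nat.card (orbit G x) ≤ m) :
    (#F + #Fᶜ / m : K) ≤ Nat.card (orbitRel.Quotient G X) := by
  rw [card_orbitRel_quotient_eq_sum_inv, ← sum_add_sum_compl F]
  gcongr ?_ + ?_
  · rw [card_eq_sum_ones, Nat.cast_sum]
    refine (sum_congr rfl fun x hx => ?_).le
    have := Fintype.ofFinite (orbit G x)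
    rw [Nat.card_eq_fintype_card, mem_fixedPoints_iff_card_orbit_eq_one.1 (hF hx)]
    simp
  · calc (#Fᶜ / m : K) = ∑ _x ∈ Fᶜ, (m : K)⁻¹ := by simp [div_eq_mul_inv]
      _ ≤ _ := sum_le_sum fun x _ => by
          have := (nonempty_orbit (M := G) x).to_subtype
          exact inv_anti₀ (by exact_mod_cast Nat.card_pos) (by exact_mod_cast h x)

theorem le_stabilizer_iff_orbitRel_le_ker {H : Subgroup G} {s : Set X} :
    H ≤ stabilizer G s ↔ orbitRel H X ≤ Setoid.ker (· ∈ s) := by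
  constructor
  · rintro hH x y ⟨h, rfl⟩
    have hs : (h : G) • s = s := hH h.2
    rw [Setoid.ker_def, eq_iff_iff]
    conv_lhs => rw [← hs]
    exact Set.smul_mem_smul_set_iff
  · intro hs h hh
    rw [mem_stabilizer_iff]
    ext x
    rw [Set.mem_smul_set_iff_inv_smul_mem]
    exact eq_iff_iff.1 (hs (mem_orbit x (⟨h, hh⟩ : H)⁻¹))

theorem ncard_setOf_le_stabilizer [Finite X] (H : Subgroup G) :
    {s : Set X | H ≤ stabilizer G s}.ncard = 2 ^ Nat.card (orbitRel.Quotient H X) := by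
  rw [← Nat.card_coe_set_eq]
  calc Nat.card {s : Set X | H ≤ stabilizer G s}
      = Nat.card {s : Set X // orbitRel H X ≤ Setoid.ker (· ∈ s)} :=
        Nat.card_congr (Equiv.subtypeEquivRight fun _ => le_stabilizer_iff_orbitRel_le_ker)
    _ = Nat.card (orbitRel.Quotient H X → Prop) := Nat.card_congr (Setoid.liftEquiv _)
    _ = _ := by simp [Nat.card_fun]

end MulAction

namespace Sylow

variable {G : Type*} [Group G] {p : ℕ}

theorem smul_le_stabilizer_smul_iff {α : Type*} [MulAction G α] {P : Sylow p G} {g : G} {a : α} :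
    ((g • P : Sylow p G) : Subgroup G) ≤ stabilizer G (g • a) ↔
      (P : Subgroup G) ≤ stabilizer G a := by
  rw [coe_subgroup_smul, stabilizer_smul_eq_stabilizer_map_conj]
  exact Subgroup.pointwise_smul_le_pointwise_smul_iff

theorem ncard_setOf_exists_le_stabilizer_le [Finite G] [Fact p.Prime] {α : Type*}
    [MulAction G α] [Finite α] (P : Sylow p G) :
    {a : α | ∃ Q : Sylow p G, (Q : Subgroup G) ≤ stabilizer G a}.ncard ≤
      (Subgroup.normalizer (P : Set G)).index *
        {a : α | (P : Subgroup G) ≤ stabilizer G a}.ncard := by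
  have := Fintype.ofFinite (Sylow p G)
  have hconj (Q : Sylow p G) : {a : α | (Q : Subgroup G) ≤ stabilizer G a}.ncard =
      {a : α | (P : Subgroup G) ≤ stabilizer G a}.ncard := by
    obtain ⟨g, rfl⟩ := MulAction.exists_smul_eq G P Q
    rw [← Set.ncard_smul_set g {a : α | (P : Subgroup G) ≤ stabilizer G a}]
    congr 1
    ext a
    simp only [Set.mem_smul_set_iff_inv_smul_mem, Set.mem_ofPred_eq]
    rw [← smul_le_stabilizer_smul_iff (g := g) (P := P), smul_inv_smul]
  calc _ = (⋃ Q : Sylow p G, {a : α | (Q : Subgroup G) ≤ stabilizer G a}).ncard := by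
        congr 1; ext; simp
    _ ≤ ∑ Q : Sylow p G, {a : α | (Q : Subgroup G) ≤ stabilizer G a}.ncard :=
        Set.ncard_iUnion_le_of_fintype _
    _ = _ := by
        rw [sum_congr rfl fun Q _ => hconj Q, sum_const, card_univ, smul_eq_mul,
          ← Nat.card_eq_fintype_card, card_eq_index_normalizer]

theorem pPart_card_lt_of_forall_not_le [Finite G] [Fact p.Prime] {H : Subgroup G}
    (hH : ∀ Q : Sylow p G, ¬ (Q : Subgroup G) ≤ H) : pPart p (Nat.card H) < pPart p (Nat.card G) := by
  refine (Nat.le_of_dvd (Nat.ordProj_pos _ p) (Nat.ordProj_dvd_ordProj_of_dvd Nat.card_pos.ne'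
    (Subgroup.card_subgroup_dvd_card H) p)).lt_of_ne fun heq => ?_
  obtain ⟨R⟩ : Nonempty (Sylow p H) := inferInstance
  have hR : Nat.card ((R : Subgroup H).map H.subtype) = p ^ (Nat.card G).factorization p := by
    rw [Subgroup.card_map_of_injective H.subtype_injective, R.card_eq_multiplicity]
    exact heq
  exact hH (ofCard _ hR) (by simpa using Subgroup.map_subtype_le (R : Subgroup H))

end Sylow

theorem one_lt_pPart_of_dvd {p n : ℕ} (hp : p.Prime) (hn : n ≠ 0) (h : p ∣ n) : 1 < pPart p n :=
  Nat.one_lt_pow (hp.factorization_pos_of_dvd hn h).ne' hp.one_lt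

theorem Real.mul_pow_lt_pow_of_lt_rpow {a b e : ℝ} {m n : ℕ} (hb : 1 ≤ b) (ha : a < b ^ e)
    (h : e + m ≤ n) : a * b ^ m < b ^ n := by
  rw [← Real.rpow_natCast, ← Real.rpow_natCast]
  calc a * b ^ (m : ℝ) < b ^ e * b ^ (m : ℝ) := mul_lt_mul_of_pos_right ha (by positivity)
    _ = b ^ (e + m) := (Real.rpow_add (by positivity) e m).symm
    _ ≤ b ^ (n : ℝ) := Real.rpow_le_rpow_of_exponent_le hb h

theorem p_moderate_of_normalizer_index_small_general
    (p : ℕ) (hp : p.Prime) (G Ω : Type*) [Group G] [Finite G] [Finite Ω]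
    [MulAction G Ω]
    (P : Sylow p G)
    (z : (P : Subgroup G))
    (hz : z ∈ frattini (P : Subgroup G) ⊓ Subgroup.center (P : Subgroup G))
    (hzord : orderOf z = p)
    -- f is the number of fixed points of z on Ω
    (f : ℕ) (hf : f = Nat.card {ω : Ω // (z : G) • ω = ω})
    (hlt : ((Subgroup.normalizer ((P : Subgroup G) : Set G)).index : ℝ) <
      (2 : ℝ) ^ (((Nat.card Ω : ℝ) - (f : ℝ)) * (1 / (p : ℝ) - 1 / (p : ℝ) ^ 2))) :
    IsPModerate p G Ω := by
  classical
  have := Fact.mk hp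
  have := Fintype.ofFinite Ω
  set Z := Subgroup.zpowers (z : G)
  set F : Finset Ω := {ω | (z : G) • ω = ω}
  have hnf : (Nat.card Ω : ℝ) - f = #Fᶜ := by
    rw [hf, Nat.card_eq_fintype_card, Nat.card_eq_fintype_card, Fintype.card_subtype, card_compl,
      Nat.cast_sub (card_le_univ F)]
  have hZ : (#F + #Fᶜ / p : ℝ) ≤ Nat.card (orbitRel.Quotient Z Ω) := by
    refine le_card_orbitRel_quotient_of_card_orbit_le F (fun ω hω g => ?_) fun ω => ?_
    · exact Subgroup.zpowers_le.2 (show (z : G) ∈ stabilizer G ω by simpa [F] using hω) g.2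
    · rw [← hzord, ← Subgroup.orderOf_coe, ← Nat.card_zpowers]
      exact Finite.card_range_le _
  have hP : (Nat.card (orbitRel.Quotient P Ω) : ℝ) ≤ #F + #Fᶜ / (p ^ 2 : ℕ) :=
    card_orbitRel_quotient_le_of_le_card_orbit F (pow_pos hp.pos 2) fun ω hω =>
      P.isPGroup'.sq_le_card_orbit hz.1 fun h => hω (by simpa [F, Subgroup.smul_def] using h)
  have hexp : ((Nat.card Ω : ℝ) - f) * (1 / p - 1 / p ^ 2) + Nat.card (orbitRel.Quotient P Ω) ≤
      Nat.card (orbitRel.Quotient Z Ω) := by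
    rw [hnf, mul_sub, mul_one_div, mul_one_div]
    push_cast at hP
    linarith
  have hcount : {Δ : Set Ω | ∃ Q : Sylow p G, ↑Q ≤ stabilizer G Δ}.ncard <
      {Δ : Set Ω | Z ≤ stabilizer G Δ}.ncard := by
    refine (P.ncard_setOf_exists_le_stabilizer_le).trans_lt ?_
    rw [ncard_setOf_le_stabilizer, ncard_setOf_le_stabilizer]
    exact_mod_cast Real.mul_pow_lt_pow_of_lt_rpow one_le_two hlt hexp
  obtain ⟨Δ, hΔZ, hΔ⟩ := Set.exists_mem_notMem_of_ncard_lt_ncard hcount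
  refine ⟨Δ, one_lt_pPart_of_dvd hp Nat.card_pos.ne' ?_,
    Sylow.pPart_card_lt_of_forall_not_le fun Q hQ => hΔ ⟨Q, hQ⟩⟩
  rw [← hzord, ← Subgroup.orderOf_coe]
  exact Subgroup.orderOf_dvd_natCard _ (hΔZ (Subgroup.mem_zpowers _))

theorem p_moderate_of_normalizer_index_small
    (p : ℕ) (hp : p.Prime) (G Ω : Type*) [Group G] [Finite G] [Finite Ω]
    [MulAction G Ω] [FaithfulSMul G Ω]
    (P : Sylow p G)
    -- P is not elementary abelian
    (hP : ¬ ((∀ x y : P, x * y = y * x) ∧ ∀ x : P, x ^ p = 1))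
    (z : (P : Subgroup G))
    (hz : z ∈ frattini (P : Subgroup G) ⊓ Subgroup.center (P : Subgroup G))
    (hzord : orderOf z = p)
    -- f is the number of fixed points of z on Ω
    (f : ℕ) (hf : f = Nat.card {ω : Ω // (z : G) • ω = ω})
    (hlt : ((Subgroup.normalizer ((P : Subgroup G) : Set G)).index : ℝ) <
      (2 : ℝ) ^ (((Nat.card Ω : ℝ) - (f : ℝ)) * (1 / (p : ℝ) - 1 / (p : ℝ) ^ 2))) :
    IsPModerate p G Ω :=
  p_moderate_of_normalizer_index_small_general p hp G Ω P z hz hzord f hf hlt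
end

section
/- Let p be a prime and let m be a natural number with m < p². Then every p-subgroup of the symmetric group Sym(m) on m letters is elementary abelian; that is, it is abelian and every element of it has order dividing p. -/
/-!
Every orbit of a `p`-group has `p`-power size, so when `m < p ^ 2` each orbit of `Q` has at most
`p` points. The image of `Q` in the permutations of one orbit is then a `p`-group of order
dividing `p !`, hence of order `1` or `p`: it is cyclic of exponent dividing `p`. Since `Q` acts
faithfully, it is detected by these images, so it is abelian of exponent dividing `p` as well.
-/

open MulAction Equiv Nat

theorem Nat.Prime.pow_dvd_factorial_self_iff {p r : ℕ} (hp : p.Prime) : p ^ r ∣ p ! ↔ r ≤ 1 := by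
  have hlog : log p p < 2 :=
    Nat.log_lt_of_lt_pow hp.ne_zero (by simpa using Nat.pow_lt_pow_right hp.one_lt one_lt_two)
  simp [hp.pow_dvd_factorial_iff hlog, Nat.div_self hp.pos]

theorem IsPGroup.card_dvd_prime_of_card_le {p : ℕ} (hp : p.Prime) {β : Type*} [Finite β]
    {H : Subgroup (Perm β)} (hH : IsPGroup p H) (hβ : Nat.card β ≤ p) : Nat.card H ∣ p := by
  have := Fact.mk hp
  obtain ⟨k, hk⟩ := hH.exists_card_eq
  have hk_dvd : p ^ k ∣ p ! :=
    calc p ^ k = Nat.card H := hk.symm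
      _ ∣ Nat.card (Perm β) := H.card_subgroup_dvd_card
      _ = (Nat.card β)! := Nat.card_perm
      _ ∣ p ! := Nat.factorial_dvd_factorial hβ
  rw [hk]
  simpa using pow_dvd_pow p (hp.pow_dvd_factorial_self_iff.mp hk_dvd)

theorem IsPGroup.card_orbit_le_of_lt_sq {p : ℕ} (hp : p.Prime) {G α : Type*} [Group G]
    [MulAction G α] [Finite α] (hG : IsPGroup p G) (hα : Nat.card α < p ^ 2) (a : α) :
    Nat.card (orbit G a) ≤ p := by
  have := Fact.mk hp
  obtain ⟨n, hn⟩ := hG.card_orbit a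
  have hlt : p ^ n < p ^ 2 := hn ▸ (Finite.card_subtype_le _).trans_lt hα
  have hn1 : n ≤ 1 := Nat.lt_succ_iff.mp ((Nat.pow_lt_pow_iff_right hp.one_lt).mp hlt)
  simpa [hn] using Nat.pow_le_pow_right hp.pos hn1

theorem mul_comm_of_card_dvd_prime {p : ℕ} (hp : p.Prime) {G : Type*} [Group G]
    (h : Nat.card G ∣ p) (a b : G) : a * b = b * a :=
  have := Fact.mk hp
  (isCyclic_of_card_dvd_prime h).commGroup.mul_comm a b

theorem pow_eq_one_of_card_dvd {n : ℕ} {G : Type*} [Group G] (h : Nat.card G ∣ n) (g : G) :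
    g ^ n = 1 :=
  Monoid.exponent_dvd_iff_forall_pow_eq_one.mp (Group.exponent_dvd_nat_card.trans h) g

theorem MulAction.eq_of_forall_toPermHom_orbit_eq {G α : Type*} [Group G] [MulAction G α]
    [FaithfulSMul G α] {x y : G}
    (h : ∀ a : α, toPermHom G (orbit G a) x = toPermHom G (orbit G a) y) : x = y :=
  eq_of_smul_eq_smul fun a => congrArg Subtype.val (Equiv.congr_fun (h a) ⟨a, mem_orbit_self a⟩)

theorem p_subgroup_of_sym_lt_p_sq_elementary_abelian
    (p : ℕ) (hp : p.Prime) (m : ℕ) (hm : m < p ^ 2)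
    (Q : Subgroup (Equiv.Perm (Fin m))) (hQ : IsPGroup p Q) :
    (∀ x y : Q, x * y = y * x) ∧ ∀ x : Q, x ^ p = 1 := by
  let ρ (a : Fin m) := (toPermHom Q (orbit Q a)).rangeRestrict
  have hm' : Nat.card (Fin m) < p ^ 2 := by rwa [Nat.card_fin]
  have hρ (a : Fin m) : Nat.card (toPermHom Q (orbit Q a)).range ∣ p :=
    (hQ.of_surjective (ρ a) (toPermHom Q _).rangeRestrict_surjective).card_dvd_prime_of_card_le hp
      (hQ.card_orbit_le_of_lt_sq hp hm' a)
  constructor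
  · intro x y
    refine eq_of_forall_toPermHom_orbit_eq fun (a : Fin m) => ?_
    rw [map_mul, map_mul]
    exact congrArg Subtype.val (mul_comm_of_card_dvd_prime hp (hρ a) (ρ a x) (ρ a y))
  · intro x
    refine eq_of_forall_toPermHom_orbit_eq fun (a : Fin m) => ?_
    rw [map_pow, map_one]
    exact congrArg Subtype.val (pow_eq_one_of_card_dvd (hρ a) (ρ a x))
end

section
/- Let K = GF(8) be the field with 8 elements and let J be the group of all permutations of K of the form x ↦ a·x^{2^i} + b with a ∈ K^×, b ∈ K, and i ∈ {0, 1, 2} (the full affine semilinear group of K). Then |J| = 168, J has exactly 28 Sylow 3-subgroups, and every Sylow 3-subgroup of J has exactly 4 orbits on K, with orbit sizes 1, 1, 3, 3. -/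
/-!
Sending `(a, b, i)` to `x ↦ a * x ^ 2 ^ i + b` is injective, because a polynomial of degree
`< 8` vanishing on `GF(8)` is zero; hence `|J| = 7 * 8 * 3 = 168` and a Sylow `3`-subgroup `P`
has order `3`.

For `i = 0`, two fixed points already force `x ↦ a * x ^ 2 ^ i + b` to be the identity. For
`i ≠ 0`, three distinct fixed points `x, y, z` would give `r = (y - x) / (z - x) ≠ 0, 1` with
`r ^ 2 ^ i = r`, impossible since `0` and `1` are the only elements of `GF(8)` fixed by a
nontrivial power of the Frobenius. So every nontrivial element of `P` fixes at most two points; the number of fixed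
points of `P` is `≡ 8 (mod 3)`, hence exactly `2`, and Burnside's lemma counts
`(8 + 2 + 2) / 3 = 4` orbits.

Conjugating the Frobenius by the affine map `0 ↦ u, 1 ↦ v` shows that every pair `{u, v}` is the
fixed-point set of some `P`. So there are at least `28` Sylow `3`-subgroups; their number divides
`56` and is `≡ 1 (mod 3)`, so it is `28`.
-/

open Equiv MulAction Polynomial

theorem eq_of_forall_pow_eq_pow {F : Type*} [Field F] [Finite F] {m n : ℕ}
    (hm : m < Nat.card F) (hn : n < Nat.card F) (h : ∀ x : F, x ^ m = x ^ n) : m = n := by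
  have := Fintype.ofFinite F
  have hX : (X ^ m : F[X]) = X ^ n :=
    eq_of_natDegree_lt_card_of_eval_eq _ _ Function.injective_id (by simpa using h)
      (by simpa [← Nat.card_eq_fintype_card] using ⟨hm, hn⟩)
  simpa using congrArg natDegree hX

theorem MulAction.fixedPoints_subset_fixedBy {M α : Type*} [Monoid M] [MulAction M α] (m : M) :
    fixedPoints M α ⊆ fixedBy α m :=
  fun _ hx => hx m

section AffineSemilinear

variable {F : Type*} [Field F]

def IsAffineSemilinearGroup (p n : ℕ) (J : Subgroup (Perm F)) : Prop :=
  ∀ σ : Perm F, σ ∈ J ↔ ∃ (a : Fˣ) (b : F) (i : Fin n), ∀ x, σ x = a * x ^ p ^ (i : ℕ) + b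

variable (p : ℕ) [ExpChar F p] [PerfectRing F p]

noncomputable def affineSemilinearPerm (a : Fˣ) (b : F) (i : ℕ) : Perm F :=
  (iterateFrobeniusEquiv F p i).toEquiv.trans ((Units.mulLeft a).trans (Equiv.addRight b))

@[simp]
theorem affineSemilinearPerm_apply (a : Fˣ) (b : F) (i : ℕ) (x : F) :
    affineSemilinearPerm p a b i x = a * x ^ p ^ i + b := rfl

theorem affineSemilinearPerm_sub (a : Fˣ) (b : F) (i : ℕ) (x y : F) :
    affineSemilinearPerm p a b i y - affineSemilinearPerm p a b i x = a * (y - x) ^ p ^ i := by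
  simp [sub_pow_expChar_pow, mul_sub]

theorem affineSemilinearPerm_one_zero_zero : affineSemilinearPerm p (1 : Fˣ) 0 0 = 1 := by
  ext; simp

theorem affineSemilinearPerm_injective [Finite F] {n : ℕ} (hF : Nat.card F = p ^ n) :
    Function.Injective fun t : Fˣ × F × Fin n => affineSemilinearPerm p t.1 t.2.1 t.2.2 := by
  rintro ⟨a, b, i⟩ ⟨a', b', i'⟩ h
  have h' (x : F) : a * x ^ p ^ (i : ℕ) + b = a' * x ^ p ^ (i' : ℕ) + b' := by
    simpa using congrFun (congrArg DFunLike.coe h) x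
  have hp : 1 < p := by
    have := hF ▸ Finite.one_lt_card (α := F)
    exact (Nat.one_lt_pow_iff (by rintro rfl; simp at this)).mp this
  obtain rfl : b = b' := by simpa [(zero_lt_one.trans hp).ne'] using h' 0
  obtain rfl : a = a' := by simpa [Units.ext_iff] using h' 1
  have hlt (j : Fin n) : p ^ (j : ℕ) < Nat.card F := hF ▸ Nat.pow_lt_pow_right hp j.isLt
  have hpow := eq_of_forall_pow_eq_pow (hlt i) (hlt i') fun x => by simpa using h' x
  simp [Fin.ext_iff, Nat.pow_right_injective hp hpow]

namespace IsAffineSemilinearGroup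

variable {p} {n : ℕ} {J : Subgroup (Perm F)}

theorem mem_iff (hJ : IsAffineSemilinearGroup p n J) {σ : Perm F} :
    σ ∈ J ↔ ∃ (a : Fˣ) (b : F) (i : Fin n), affineSemilinearPerm p a b i = σ := by
  simp only [hJ σ, Equiv.ext_iff, affineSemilinearPerm_apply, eq_comm]

theorem affineSemilinearPerm_mem (hJ : IsAffineSemilinearGroup p n J) (a : Fˣ) (b : F)
    (i : Fin n) : affineSemilinearPerm p a b i ∈ J :=
  hJ.mem_iff.2 ⟨a, b, i, rfl⟩

theorem natCard_eq [Finite F] (hJ : IsAffineSemilinearGroup p n J) (hF : Nat.card F = p ^ n) :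
    Nat.card J = (Nat.card F - 1) * Nat.card F * n := by
  have hrange : (J : Set (Perm F)) =
      Set.range fun t : Fˣ × F × Fin n => affineSemilinearPerm p t.1 t.2.1 t.2.2 := by
    ext σ
    simp [hJ.mem_iff]
  rw [← SetLike.coe_sort_coe, hrange,
    Nat.card_range_of_injective (affineSemilinearPerm_injective p hF)]
  simp [Nat.card_units, mul_assoc]

end IsAffineSemilinearGroup

end AffineSemilinear

local notation "K" => GaloisField 2 3

theorem natCard_galoisField_two_three : Nat.card K = 8 := GaloisField.card 2 3 (by norm_num)

theorem pow_eight_galoisField_two_three (x : K) : x ^ 8 = x := by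
  have := Fintype.ofFinite K
  simpa [← Nat.card_eq_fintype_card, natCard_galoisField_two_three] using FiniteField.pow_card x

theorem eq_zero_or_one_of_pow_two_pow_eq_self {r : K} {i : Fin 3} (hi : i ≠ 0)
    (hr : r ^ 2 ^ (i : ℕ) = r) : r = 0 ∨ r = 1 := by
  have hr2 : r ^ 2 = r := by
    fin_cases i
    · contradiction
    · simpa using hr
    · calc r ^ 2 = (r ^ 8) ^ 2 := by rw [pow_eight_galoisField_two_three]
        _ = (r ^ 4) ^ 4 := by ring
        _ = r := by simp_all
  exact eq_zero_or_one_of_sq_eq_self hr2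

theorem affineSemilinearPerm_eq_one_of_three_fixed {a : Kˣ} {b : K} {i : Fin 3} {x y z : K}
    (hxy : x ≠ y) (hxz : x ≠ z) (hyz : y ≠ z) (hx : affineSemilinearPerm 2 a b i x = x)
    (hy : affineSemilinearPerm 2 a b i y = y) (hz : affineSemilinearPerm 2 a b i z = z) :
    affineSemilinearPerm 2 a b i = 1 := by
  have hdiff {u v : K} (hu : affineSemilinearPerm 2 a b i u = u)
      (hv : affineSemilinearPerm 2 a b i v = v) : (v - u) ^ 2 ^ (i : ℕ) = (a : K)⁻¹ * (v - u) := by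
    have h := affineSemilinearPerm_sub 2 a b i u v
    rw [hu, hv] at h
    rw [eq_inv_mul_iff_mul_eq₀ a.ne_zero, ← h]
  have hs := hdiff hx hy
  have ht := hdiff hx hz
  by_cases hi : i = 0
  · subst hi
    have ha : a = 1 := by
      rwa [Fin.val_zero, pow_zero, pow_one, eq_comm, mul_eq_right₀ (sub_ne_zero.2 hxy.symm),
        inv_eq_one, Units.val_eq_one] at hs
    subst ha
    ext w
    simpa using hx
  · have hr : ((y - x) / (z - x)) ^ 2 ^ (i : ℕ) = (y - x) / (z - x) := by
      rw [div_pow, hs, ht, mul_div_mul_left _ _ (inv_ne_zero a.ne_zero)]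
    rcases eq_zero_or_one_of_pow_two_pow_eq_self hi hr with h | h
    · simp [sub_ne_zero.2 hxy.symm, sub_ne_zero.2 hxz.symm] at h
    · simp [div_eq_one_iff_eq (sub_ne_zero.2 hxz.symm), hyz] at h

theorem factorization_168_three : Nat.factorization 168 3 = 1 := by
  rw [show 168 = 3 * 56 by rfl, Nat.factorization_mul (by norm_num) (by norm_num)]
  simp [Nat.Prime.factorization_self Nat.prime_three, Nat.factorization_eq_zero_of_not_dvd]

namespace IsAffineSemilinearGroup

variable {J : Subgroup (Perm K)}

theorem natCard_eq_168 (hJ : IsAffineSemilinearGroup 2 3 J) : Nat.card J = 168 := by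
  rw [hJ.natCard_eq natCard_galoisField_two_three, natCard_galoisField_two_three]

theorem natCard_coe_sylow (hJ : IsAffineSemilinearGroup 2 3 J) (P : Sylow 3 J) :
    Nat.card (P : Subgroup J) = 3 := by
  rw [P.card_eq_multiplicity, hJ.natCard_eq_168, factorization_168_three, pow_one]

theorem natCard_fixedBy_le_two (hJ : IsAffineSemilinearGroup 2 3 J) {σ : Perm K} (hσJ : σ ∈ J)
    (hσ : σ ≠ 1) : Nat.card (fixedBy K σ) ≤ 2 := by
  obtain ⟨a, b, i, rfl⟩ := hJ.mem_iff.1 hσJ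
  by_contra! h
  rw [Nat.card_coe_set_eq, Set.two_lt_ncard] at h
  obtain ⟨x, hx, y, hy, z, hz, hxy, hxz, hyz⟩ := h
  exact hσ (affineSemilinearPerm_eq_one_of_three_fixed hxy hxz hyz hx hy hz)

theorem natCard_fixedBy_sylow_le_two (hJ : IsAffineSemilinearGroup 2 3 J) (P : Sylow 3 J)
    {g : (P : Subgroup J)} (hg : g ≠ 1) : Nat.card (fixedBy K g) ≤ 2 :=
  hJ.natCard_fixedBy_le_two (g : J).2 (by simpa using hg)

theorem natCard_fixedPoints_sylow (hJ : IsAffineSemilinearGroup 2 3 J) (P : Sylow 3 J) :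
    Nat.card (fixedPoints P K) = 2 := by
  have : Nontrivial (P : Subgroup J) :=
    Finite.one_lt_card_iff_nontrivial.1 (by simp [hJ.natCard_coe_sylow P])
  obtain ⟨g, hg⟩ := exists_ne (1 : (P : Subgroup J))
  have hle : Nat.card (fixedPoints P K) ≤ 2 :=
    (Nat.card_mono (Set.toFinite _) (fixedPoints_subset_fixedBy g)).trans
      (hJ.natCard_fixedBy_sylow_le_two P hg)
  have hmod := P.isPGroup'.card_modEq_card_fixedPoints K
  rw [natCard_galoisField_two_three, Nat.ModEq] at hmod
  omega

theorem natCard_fixedBy_sylow (hJ : IsAffineSemilinearGroup 2 3 J) (P : Sylow 3 J)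
    {g : (P : Subgroup J)} (hg : g ≠ 1) : Nat.card (fixedBy K g) = 2 :=
  (hJ.natCard_fixedBy_sylow_le_two P hg).antisymm <| (hJ.natCard_fixedPoints_sylow P).symm.le.trans
    (Nat.card_mono (Set.toFinite _) (fixedPoints_subset_fixedBy g))

theorem natCard_orbit_sylow (hJ : IsAffineSemilinearGroup 2 3 J) (P : Sylow 3 J) (x : K) :
    Nat.card (orbit P x) = 1 ∨ Nat.card (orbit P x) = 3 := by
  have : Nat.card (orbit P x) ∣ 3 := by
    rw [Nat.card_coe_set_eq, ← index_stabilizer]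
    exact (Subgroup.index_dvd_card _).trans (dvd_of_eq (hJ.natCard_coe_sylow P))
  exact (Nat.dvd_prime Nat.prime_three).1 this

theorem natCard_orbitRel_quotient_sylow (hJ : IsAffineSemilinearGroup 2 3 J) (P : Sylow 3 J) :
    Nat.card (orbitRel.Quotient P K) = 4 := by
  classical
  have := Fintype.ofFinite K
  have := Fintype.ofFinite (P : Subgroup J)
  have hB := sum_card_fixedBy_eq_card_orbits_mul_card_group P K
  simp only [← Nat.card_eq_fintype_card] at hB
  have hsum : ∑ g ∈ Finset.univ.erase (1 : (P : Subgroup J)), Nat.card (fixedBy K g) = 2 * 2 := by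
    rw [Finset.sum_congr rfl fun g hg => hJ.natCard_fixedBy_sylow P (Finset.ne_of_mem_erase hg),
      Finset.sum_const, Finset.card_erase_of_mem (Finset.mem_univ 1), Finset.card_univ,
      ← Nat.card_eq_fintype_card, hJ.natCard_coe_sylow P, smul_eq_mul]
  rw [← Finset.add_sum_erase _ _ (Finset.mem_univ 1), hsum, fixedBy_one_eq_univ, Nat.card_univ,
    natCard_galoisField_two_three, hJ.natCard_coe_sylow P] at hB
  exact (Nat.eq_of_mul_eq_mul_right three_pos hB).symm

theorem exists_sylow_mem_fixedPoints (hJ : IsAffineSemilinearGroup 2 3 J) {u v : K}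
    (huv : u ≠ v) : ∃ P : Sylow 3 J, u ∈ fixedPoints P K ∧ v ∈ fixedPoints P K := by
  let φ : J := ⟨affineSemilinearPerm 2 1 0 1, hJ.affineSemilinearPerm_mem 1 0 1⟩
  let τ : J := ⟨affineSemilinearPerm 2 (Units.mk0 (v - u) (sub_ne_zero.2 huv.symm)) u 0,
    hJ.affineSemilinearPerm_mem _ _ 0⟩
  have hφ3 : φ ^ 3 = 1 := by
    ext x
    simp [φ, pow_succ]
    linear_combination pow_eight_galoisField_two_three x
  have hφ1 : φ ≠ 1 := by
    have h := (affineSemilinearPerm_injective 2 natCard_galoisField_two_three).ne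
      (a₁ := ((1 : Kˣ), (0 : K), (1 : Fin 3))) (a₂ := (1, 0, 0)) (by simp)
    simp only [Fin.val_one, Fin.val_zero, affineSemilinearPerm_one_zero_zero] at h
    exact fun h1 => h (congrArg Subtype.val h1)
  let σ := τ * φ * τ⁻¹
  have hσ : orderOf σ = 3 := (SemiconjBy.conj_mk τ φ).orderOf_eq ▸ orderOf_eq_prime hφ3 hφ1
  have hfix {x : K} (hx : φ • x = x) : τ • x ∈ fixedPoints (Subgroup.zpowers σ) K :=
    fun g => Subgroup.zpowers_le.2
      (mem_stabilizer_iff.2 (show σ • τ • x = τ • x by simp [σ, mul_smul, hx])) g.2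
  refine ⟨Sylow.ofCard (Subgroup.zpowers σ) ?_, ?_⟩
  · rw [Nat.card_zpowers, hσ, hJ.natCard_eq_168, factorization_168_three, pow_one]
  · have hτ0 : τ • (0 : K) = u := by simp [τ, Subgroup.smul_def]
    have hτ1 : τ • (1 : K) = v := by simp [τ, Subgroup.smul_def]
    exact ⟨hτ0 ▸ hfix (by simp [φ, Subgroup.smul_def]),
      hτ1 ▸ hfix (by simp [φ, Subgroup.smul_def])⟩

theorem natCard_powersetCard_two_le_natCard_sylow (hJ : IsAffineSemilinearGroup 2 3 J) :
    Nat.card (Set.powersetCard K 2) ≤ Nat.card (Sylow 3 J) := by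
  classical
  let Φ : Sylow 3 J → Set.powersetCard K 2 := fun P =>
    ⟨(Set.toFinite (fixedPoints P K)).toFinset, by
      simp [← Set.ncard_eq_toFinset_card, ← Nat.card_coe_set_eq, hJ.natCard_fixedPoints_sylow P]⟩
  refine Nat.card_le_card_of_surjective Φ ?_
  rintro ⟨s, hs⟩
  obtain ⟨u, v, huv, rfl⟩ := Finset.card_eq_two.1 hs
  obtain ⟨P, hu, hv⟩ := hJ.exists_sylow_mem_fixedPoints huv
  refine ⟨P, Subtype.ext (Finset.eq_of_subset_of_card_le ?_ ?_).symm⟩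
  · simp [Φ, Set.insert_subset_iff, hu, hv]
  · rw [(Φ P).2, hs]

theorem natCard_sylow (hJ : IsAffineSemilinearGroup 2 3 J) : Nat.card (Sylow 3 J) = 28 := by
  obtain ⟨P⟩ : Nonempty (Sylow 3 J) := inferInstance
  have hindex := (P : Subgroup J).card_mul_index
  rw [hJ.natCard_coe_sylow P, hJ.natCard_eq_168] at hindex
  have hdvd : Nat.card (Sylow 3 J) ∣ 56 := by
    have := P.card_dvd_index
    rwa [show (P : Subgroup J).index = 56 by omega] at this
  have hmod := card_sylow_modEq_one 3 J
  have hge := hJ.natCard_powersetCard_two_le_natCard_sylow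
  rw [Set.powersetCard.card, natCard_galoisField_two_three, show Nat.choose 8 2 = 28 from rfl]
    at hge
  have hle := Nat.le_of_dvd (by norm_num) hdvd
  rw [Nat.ModEq] at hmod
  interval_cases Nat.card (Sylow 3 J) <;> omega

end IsAffineSemilinearGroup

/-- The affine semilinear group of `GF(8)`: `|J| = 168`, `J` has exactly 28 Sylow
3-subgroups, and each Sylow 3-subgroup has exactly 4 orbits on `GF(8)`, of sizes
1, 1, 3, 3. -/
theorem affine_semilinear_group_GF8_sylow_three
    (J : Subgroup (Equiv.Perm (GaloisField 2 3)))
    -- J consists of all maps x ↦ a·x^(2^i) + b with a ≠ 0, i ∈ {0, 1, 2}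
    (hJ : ∀ σ : Equiv.Perm (GaloisField 2 3), σ ∈ J ↔
      ∃ (a : (GaloisField 2 3)ˣ) (b : GaloisField 2 3) (i : Fin 3),
        ∀ x : GaloisField 2 3, σ x = (a : GaloisField 2 3) * x ^ (2 ^ (i : ℕ)) + b) :
    Nat.card J = 168 ∧
      Nat.card (Sylow 3 J) = 28 ∧
      ∀ P : Sylow 3 J,
        Nat.card (MulAction.orbitRel.Quotient (P : Subgroup J) (GaloisField 2 3)) = 4 ∧
        Nat.card {x : GaloisField 2 3 // ∀ g ∈ (P : Subgroup J), g • x = x} = 2 ∧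
        ∀ x : GaloisField 2 3,
          Nat.card (MulAction.orbit (P : Subgroup J) x) = 1 ∨
          Nat.card (MulAction.orbit (P : Subgroup J) x) = 3 := by
  have hJ' : IsAffineSemilinearGroup 2 3 J := hJ
  refine ⟨hJ'.natCard_eq_168, hJ'.natCard_sylow, fun P =>
    ⟨hJ'.natCard_orbitRel_quotient_sylow P, ?_, hJ'.natCard_orbit_sylow P⟩⟩
  exact (Nat.card_congr (Equiv.subtypeEquivRight fun x => by simp [mem_fixedPoints])).trans
    (hJ'.natCard_fixedPoints_sylow P)
end
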